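/- arXiv:1910.12263 — 4 statements merged into one kernel-verified Lean document; each statement's English description precedes it below -/
import Mathlib

section
/- Let Y_{ij} and Y_{il} (same row i, different columns j ≠ l) be conditionally independent Poisson variables with rates ∑_k θ_{ik}β_{jk} and ∑_k θ_{ik}β_{lk} respectively, where all θ's and β's are mutually independent with the θ's having mean μ_θ, variance σ_θ² and the β's mean μ_β, variance σ_β². Then Cov[Y_{ij}, Y_{il}] = K·μ_β²·σ_θ². -/
open MeasureTheory ProbabilityTheory Real
open scoped ENNReal NNReal Nat

/-!
Write `L₁ = ∑ k, θ k * β k` and `L₂ = ∑ k, θ k * β' k` for the two rates. Given the rates, `Y₁` and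
`Y₂` are independent Poisson, so `E[Y₁ Y₂ | L] = L₁ L₂` and `E[Yᵢ | L] = Lᵢ`: the covariance of the
counts is that of the rates. Expanding `L₁ L₂ = ∑ k l, θ k θ l β k β' l`, independence gives
`E[L₁ L₂] = ∑ k l, E[θ k θ l] μβ²` with `E[θ k θ l] = μθ² + [k = l] σθ²`, while
`E[L₁] E[L₂] = (K μθ μβ)²`; only the `K` diagonal variance terms survive.
-/

lemma lintegral_poissonMeasure (r : ℝ≥0) (f : ℕ → ℝ≥0∞) :
    ∫⁻ n, f n ∂Po(r) = ∑' n, ENNReal.ofReal (exp (-r) * r ^ n / n !) * f n := by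
  simp [poissonMeasure, lintegral_sum_measure, lintegral_smul_measure, lintegral_dirac]

lemma lintegral_natCast_poissonMeasure (r : ℝ≥0) : ∫⁻ n, (n : ℝ≥0∞) ∂Po(r) = r := by
  have weight_succ (n : ℕ) : ENNReal.ofReal (exp (-r) * r ^ (n + 1) / (n + 1) !) * (n + 1 : ℕ)
      = r * ENNReal.ofReal (exp (-r) * r ^ n / n !) := by
    rw [← ENNReal.ofReal_natCast, ← ENNReal.ofReal_coe_nnreal, ← ENNReal.ofReal_mul (by positivity),
      ← ENNReal.ofReal_mul (by positivity)]
    congr 1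
    rw [Nat.factorial_succ]
    push_cast
    field_simp
    ring
  have total_mass : ∑' n, ENNReal.ofReal (exp (-r) * r ^ n / n !) = 1 := by
    simpa using (lintegral_poissonMeasure r fun _ ↦ 1).symm
  rw [lintegral_poissonMeasure, tsum_eq_zero_add' ENNReal.summable]
  simp only [Nat.cast_zero, mul_zero, zero_add, weight_succ, ENNReal.tsum_mul_left, total_mass,
    mul_one]

lemma lintegral_comp_eq_lintegral_condDistrib {α β γ : Type*} [MeasurableSpace α]
    [MeasurableSpace β] [MeasurableSpace γ] [StandardBorelSpace γ] [Nonempty γ]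
    {μ : Measure α} [IsFiniteMeasure μ] {X : α → β} {Y : α → γ}
    (hX : Measurable X) (hY : Measurable Y) {g : γ → ℝ≥0∞} (hg : Measurable g) :
    ∫⁻ a, g (Y a) ∂μ = ∫⁻ a, ∫⁻ y, g y ∂condDistrib Y X μ (X a) ∂μ := by
  rw [← lintegral_map hg hY, ← condDistrib_comp_map hX.aemeasurable hY.aemeasurable,
    Measure.lintegral_bind (Kernel.aemeasurable _) hg.aemeasurable,
    lintegral_map hg.lintegral_kernel hX]

lemma integral_eq_integral_of_lintegral_ofReal_eq {α : Type*} [MeasurableSpace α]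
    {μ : Measure α} {f g : α → ℝ} (hf : 0 ≤ᵐ[μ] f) (hg : 0 ≤ᵐ[μ] g)
    (hfm : AEStronglyMeasurable f μ) (hgm : AEStronglyMeasurable g μ)
    (h : ∫⁻ a, ENNReal.ofReal (f a) ∂μ = ∫⁻ a, ENNReal.ofReal (g a) ∂μ) :
    ∫ a, f a ∂μ = ∫ a, g a ∂μ := by
  rw [integral_eq_lintegral_of_nonneg_ae hf hfm, integral_eq_lintegral_of_nonneg_ae hg hgm, h]

section MixedPoisson

variable {Ω : Type*} [MeasureSpace Ω] [IsProbabilityMeasure (ℙ : Measure Ω)]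
  {Y₁ Y₂ : Ω → ℕ} {L₁ L₂ : Ω → ℝ}

lemma lintegral_mul_of_condDistrib_eq_poissonMeasure_prod (hY₁ : Measurable Y₁)
    (hY₂ : Measurable Y₂) (hL₁ : Measurable L₁) (hL₂ : Measurable L₂)
    (hcond : ∀ᵐ ω ∂ℙ, condDistrib (fun ω' ↦ (Y₁ ω', Y₂ ω')) (fun ω' ↦ (L₁ ω', L₂ ω')) ℙ
      (L₁ ω, L₂ ω) = (poissonMeasure (L₁ ω).toNNReal).prod (poissonMeasure (L₂ ω).toNNReal))
    (f g : ℕ → ℝ≥0∞) :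
    ∫⁻ ω, f (Y₁ ω) * g (Y₂ ω) =
      ∫⁻ ω, (∫⁻ n, f n ∂Po((L₁ ω).toNNReal)) * ∫⁻ n, g n ∂Po((L₂ ω).toNNReal) := by
  rw [lintegral_comp_eq_lintegral_condDistrib (hL₁.prodMk hL₂) (hY₁.prodMk hY₂)
    (g := fun y ↦ f y.1 * g y.2) (by fun_prop)]
  refine lintegral_congr_ae (hcond.mono fun ω hω ↦ ?_)
  simp only [hω]
  exact lintegral_prod_mul (by fun_prop) (by fun_prop)

lemma integral_mul_sub_mul_eq_of_condDistrib_eq_poissonMeasure_prod (hY₁ : Measurable Y₁)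
    (hY₂ : Measurable Y₂) (hL₁ : Measurable L₁) (hL₂ : Measurable L₂)
    (hL₁_nonneg : ∀ ω, 0 ≤ L₁ ω) (hL₂_nonneg : ∀ ω, 0 ≤ L₂ ω)
    (hcond : ∀ᵐ ω ∂ℙ, condDistrib (fun ω' ↦ (Y₁ ω', Y₂ ω')) (fun ω' ↦ (L₁ ω', L₂ ω')) ℙ
      (L₁ ω, L₂ ω) = (poissonMeasure (L₁ ω).toNNReal).prod (poissonMeasure (L₂ ω).toNNReal)) :
    (∫ ω, (Y₁ ω : ℝ) * (Y₂ ω : ℝ)) - (∫ ω, (Y₁ ω : ℝ)) * (∫ ω, (Y₂ ω : ℝ)) =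
      (∫ ω, L₁ ω * L₂ ω) - (∫ ω, L₁ ω) * (∫ ω, L₂ ω) := by
  have key := lintegral_mul_of_condDistrib_eq_poissonMeasure_prod hY₁ hY₂ hL₁ hL₂ hcond
  have hY : ∀ Y : Ω → ℕ, Measurable Y → AEStronglyMeasurable (fun ω ↦ (Y ω : ℝ)) ℙ :=
    fun Y hY ↦ (measurable_from_nat.comp hY).aestronglyMeasurable
  have h₁₂ : ∫ ω, (Y₁ ω : ℝ) * (Y₂ ω : ℝ) = ∫ ω, L₁ ω * L₂ ω := by
    refine integral_eq_integral_of_lintegral_ofReal_eq (ae_of_all _ fun ω ↦ by positivity)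
      (ae_of_all _ fun ω ↦ mul_nonneg (hL₁_nonneg ω) (hL₂_nonneg ω))
      ((hY Y₁ hY₁).mul (hY Y₂ hY₂)) (hL₁.mul hL₂).aestronglyMeasurable ?_
    simpa [ENNReal.ofReal_mul, hL₁_nonneg, lintegral_natCast_poissonMeasure,
      ENNReal.ofNNReal_toNNReal] using key (↑) (↑)
  have h₁ : ∫ ω, (Y₁ ω : ℝ) = ∫ ω, L₁ ω := by
    refine integral_eq_integral_of_lintegral_ofReal_eq (ae_of_all _ fun ω ↦ by positivity)
      (ae_of_all _ hL₁_nonneg) (hY Y₁ hY₁) hL₁.aestronglyMeasurable ?_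
    simpa [lintegral_natCast_poissonMeasure, ENNReal.ofNNReal_toNNReal] using key (↑) 1
  have h₂ : ∫ ω, (Y₂ ω : ℝ) = ∫ ω, L₂ ω := by
    refine integral_eq_integral_of_lintegral_ofReal_eq (ae_of_all _ fun ω ↦ by positivity)
      (ae_of_all _ hL₂_nonneg) (hY Y₂ hY₂) hL₂.aestronglyMeasurable ?_
    simpa [lintegral_natCast_poissonMeasure, ENNReal.ofNNReal_toNNReal] using key 1 (↑)
  rw [h₁₂, h₁, h₂]

end MixedPoisson

section Moments

variable {Ω ι : Type*} [MeasurableSpace Ω] {μ : Measure Ω}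

lemma integral_sum_mul_eq_sum_mul_integral (s : Finset ι) {f g : ι → Ω → ℝ}
    (hf : ∀ i, Integrable (f i) μ) (hg : ∀ i, Integrable (g i) μ)
    (hfg : ∀ i, IndepFun (f i) (g i) μ) :
    ∫ ω, ∑ i ∈ s, f i ω * g i ω ∂μ = ∑ i ∈ s, (∫ ω, f i ω ∂μ) * ∫ ω, g i ω ∂μ := by
  rw [integral_finsetSum (f := fun i ω ↦ f i ω * g i ω) s
    fun i _ ↦ (hfg i).integrable_mul (hf i) (hg i)]
  exact Finset.sum_congr rfl fun i _ ↦
    (hfg i).integral_fun_mul_eq_mul_integral (hf i).1 (hg i).1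

lemma integral_mul_eq_sq_add_ite [DecidableEq ι] [IsProbabilityMeasure μ] {X : ι → Ω → ℝ}
    {m s : ℝ}
    (hind : Pairwise fun i j ↦ IndepFun (X i) (X j) μ) (hX : ∀ i, MemLp (X i) 2 μ)
    (hmean : ∀ i, ∫ ω, X i ω ∂μ = m) (hvar : ∀ i, variance (X i) μ = s ^ 2) (i j : ι) :
    ∫ ω, X i ω * X j ω ∂μ = m ^ 2 + if i = j then s ^ 2 else 0 := by
  obtain rfl | hij := eq_or_ne i j
  · have h := variance_eq_sub (hX i)
    simp only [hvar, hmean, Pi.pow_apply] at h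
    simp_rw [if_pos, ← sq]
    linarith
  · rw [if_neg hij, (hind hij).integral_fun_mul_eq_mul_integral (hX i).1 (hX j).1, hmean, hmean,
      sq, add_zero]

lemma integral_sum_mul_mul_sum_mul [Fintype ι] {θ β β' : ι → Ω → ℝ}
    (hindep : iIndepFun (Sum.elim θ (Sum.elim β β')) μ)
    (hθ : ∀ i, Measurable (θ i)) (hβ : ∀ i, Measurable (β i)) (hβ' : ∀ i, Measurable (β' i))
    (hθL : ∀ i, MemLp (θ i) 2 μ) (hβi : ∀ i, Integrable (β i) μ)
    (hβ'i : ∀ i, Integrable (β' i) μ) :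
    ∫ ω, (∑ k, θ k ω * β k ω) * (∑ l, θ l ω * β' l ω) ∂μ =
      ∑ k, ∑ l, (∫ ω, θ k ω * θ l ω ∂μ) * ((∫ ω, β k ω ∂μ) * ∫ ω, β' l ω ∂μ) := by
  have hmeas : ∀ i, Measurable (Sum.elim θ (Sum.elim β β') i) := by
    rintro (k | k | k)
    exacts [hθ k, hβ k, hβ' k]
  have hββ' (k l : ι) : IndepFun (β k) (β' l) μ :=
    hindep.indepFun (i := .inr (.inl k)) (j := .inr (.inr l)) (by simp)
  have hθθ_ββ' (k l : ι) : IndepFun (θ k * θ l) (β k * β' l) μ :=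
    hindep.indepFun_mul_mul hmeas (.inl k) (.inl l) (.inr (.inl k)) (.inr (.inr l))
      (by simp) (by simp) (by simp) (by simp)
  have hterm (k l : ι) : Integrable (fun ω ↦ θ k ω * θ l ω * (β k ω * β' l ω)) μ :=
    (hθθ_ββ' k l).integrable_mul ((hθL k).integrable_mul (hθL l))
      ((hββ' k l).integrable_mul (hβi k) (hβ'i l))
  simp_rw [Finset.sum_mul_sum, mul_mul_mul_comm]
  rw [integral_finsetSum _ fun k _ ↦ integrable_finsetSum _ fun l _ ↦ hterm k l]
  refine Finset.sum_congr rfl fun k _ ↦ ?_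
  rw [integral_finsetSum _ fun l _ ↦ hterm k l]
  refine Finset.sum_congr rfl fun l _ ↦ ?_
  rw [← (hββ' k l).integral_fun_mul_eq_mul_integral (hβ k).aestronglyMeasurable
      (hβ' l).aestronglyMeasurable]
  exact (hθθ_ββ' k l).integral_fun_mul_eq_mul_integral
    ((hθ k).mul (hθ l)).aestronglyMeasurable ((hβ k).mul (hβ' l)).aestronglyMeasurable

end Moments

theorem pmf_same_row_covariance_general {Ω : Type*} [MeasureSpace Ω]
    [IsProbabilityMeasure (ℙ : Measure Ω)] (K : ℕ) (θ β β' : Fin K → Ω → ℝ)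
    (Y₁ Y₂ : Ω → ℕ) (μθ μβ σθ : ℝ)
    (hθmeas : ∀ k, Measurable (θ k)) (hβmeas : ∀ k, Measurable (β k))
    (hβ'meas : ∀ k, Measurable (β' k)) (hY₁meas : Measurable Y₁) (hY₂meas : Measurable Y₂)
    (hθnonneg : ∀ k ω, 0 ≤ θ k ω) (hβnonneg : ∀ k ω, 0 ≤ β k ω)
    (hβ'nonneg : ∀ k ω, 0 ≤ β' k ω)
    (hθL : ∀ k, MemLp (θ k) 2 ℙ) (hβL : ∀ k, MemLp (β k) 2 ℙ)
    (hβ'L : ∀ k, MemLp (β' k) 2 ℙ)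
    (hindep : iIndepFun (m := fun _ => Real.measurableSpace)
      (Sum.elim θ (Sum.elim β β')) ℙ)
    (hμθ : ∀ k, (∫ ω, θ k ω) = μθ) (hσθ : ∀ k, variance (θ k) ℙ = σθ^2)
    (hμβ : ∀ k, (∫ ω, β k ω) = μβ)
    (hμβ' : ∀ k, (∫ ω, β' k ω) = μβ)
    (hcond : ∀ᵐ ω ∂ℙ,
      condDistrib (fun ω' => (Y₁ ω', Y₂ ω'))
          (fun ω' => (∑ k, θ k ω' * β k ω', ∑ k, θ k ω' * β' k ω')) ℙ
          (∑ k, θ k ω * β k ω, ∑ k, θ k ω * β' k ω) =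
        (poissonMeasure (∑ k, θ k ω * β k ω).toNNReal).prod
          (poissonMeasure (∑ k, θ k ω * β' k ω).toNNReal)) :
    (∫ ω, (Y₁ ω : ℝ) * (Y₂ ω : ℝ)) - (∫ ω, (Y₁ ω : ℝ)) * (∫ ω, (Y₂ ω : ℝ)) =
      K * (μβ^2 * σθ^2) := by
  set L₁ : Ω → ℝ := fun ω ↦ ∑ k, θ k ω * β k ω
  set L₂ : Ω → ℝ := fun ω ↦ ∑ k, θ k ω * β' k ω
  have hL₁ : Measurable L₁ := Finset.measurable_sum _ fun k _ ↦ (hθmeas k).mul (hβmeas k)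
  have hL₂ : Measurable L₂ := Finset.measurable_sum _ fun k _ ↦ (hθmeas k).mul (hβ'meas k)
  have hL₁_nonneg (ω : Ω) : 0 ≤ L₁ ω :=
    Finset.sum_nonneg fun k _ ↦ mul_nonneg (hθnonneg k ω) (hβnonneg k ω)
  have hL₂_nonneg (ω : Ω) : 0 ≤ L₂ ω :=
    Finset.sum_nonneg fun k _ ↦ mul_nonneg (hθnonneg k ω) (hβ'nonneg k ω)
  have hθi k := (hθL k).integrable one_le_two
  have hβi k := (hβL k).integrable one_le_two
  have hβ'i k := (hβ'L k).integrable one_le_two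
  have hθ_indep : Pairwise fun k l ↦ IndepFun (θ k) (θ l) :=
    fun k l hkl ↦ hindep.indepFun (i := .inl k) (j := .inl l) (by simpa using hkl)
  rw [integral_mul_sub_mul_eq_of_condDistrib_eq_poissonMeasure_prod hY₁meas hY₂meas hL₁ hL₂
      hL₁_nonneg hL₂_nonneg hcond,
    integral_sum_mul_mul_sum_mul hindep hθmeas hβmeas hβ'meas hθL hβi hβ'i,
    integral_sum_mul_eq_sum_mul_integral _ hθi hβi
      fun k ↦ hindep.indepFun (i := .inl k) (j := .inr (.inl k)) (by simp),
    integral_sum_mul_eq_sum_mul_integral _ hθi hβ'i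
      fun k ↦ hindep.indepFun (i := .inl k) (j := .inr (.inr k)) (by simp)]
  simp only [integral_mul_eq_sq_add_ite hθ_indep hθL hμθ hσθ, hμθ, hμβ, hμβ', add_mul,
    Finset.sum_add_distrib, ite_mul, zero_mul, Finset.sum_ite_eq, Finset.mem_univ, if_true,
    Finset.sum_const, Finset.card_univ, Fintype.card_fin, nsmul_eq_mul]
  ring

/-- Same-row covariance in Poisson matrix factorization: if `Y₁, Y₂` are conditionally
independent Poisson variables with rates `∑_k θ_k β_k` and `∑_k θ_k β'_k` (shared row
factors `θ`, distinct column factors `β, β'`), with all latent variables mutually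
independent, then `Cov[Y₁, Y₂] = K μβ² σθ²`. -/
theorem pmf_same_row_covariance {Ω : Type*} [MeasureSpace Ω]
    [IsProbabilityMeasure (ℙ : Measure Ω)] (K : ℕ) (θ β β' : Fin K → Ω → ℝ)
    (Y₁ Y₂ : Ω → ℕ) (μθ μβ σθ σβ : ℝ)
    (hθmeas : ∀ k, Measurable (θ k)) (hβmeas : ∀ k, Measurable (β k))
    (hβ'meas : ∀ k, Measurable (β' k)) (hY₁meas : Measurable Y₁) (hY₂meas : Measurable Y₂)
    (hθnonneg : ∀ k ω, 0 ≤ θ k ω) (hβnonneg : ∀ k ω, 0 ≤ β k ω)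
    (hβ'nonneg : ∀ k ω, 0 ≤ β' k ω)
    (hθL : ∀ k, MemLp (θ k) 2 ℙ) (hβL : ∀ k, MemLp (β k) 2 ℙ)
    (hβ'L : ∀ k, MemLp (β' k) 2 ℙ)
    (hindep : iIndepFun (m := fun _ => Real.measurableSpace)
      (Sum.elim θ (Sum.elim β β')) ℙ)
    (hμθ : ∀ k, (∫ ω, θ k ω) = μθ) (hσθ : ∀ k, variance (θ k) ℙ = σθ^2)
    (hμβ : ∀ k, (∫ ω, β k ω) = μβ) (hσβ : ∀ k, variance (β k) ℙ = σβ^2)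
    (hμβ' : ∀ k, (∫ ω, β' k ω) = μβ) (hσβ' : ∀ k, variance (β' k) ℙ = σβ^2)
    (hcond : ∀ᵐ ω ∂ℙ,
      condDistrib (fun ω' => (Y₁ ω', Y₂ ω'))
          (fun ω' => (∑ k, θ k ω' * β k ω', ∑ k, θ k ω' * β' k ω')) ℙ
          (∑ k, θ k ω * β k ω, ∑ k, θ k ω * β' k ω) =
        (poissonMeasure (∑ k, θ k ω * β k ω).toNNReal).prod
          (poissonMeasure (∑ k, θ k ω * β' k ω).toNNReal)) :
    (∫ ω, (Y₁ ω : ℝ) * (Y₂ ω : ℝ)) - (∫ ω, (Y₁ ω : ℝ)) * (∫ ω, (Y₂ ω : ℝ)) =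
      K * (μβ^2 * σθ^2) :=
  pmf_same_row_covariance_general K θ β β' Y₁ Y₂ μθ μβ σθ hθmeas hβmeas hβ'meas hY₁meas hY₂meas
    hθnonneg hβnonneg hβ'nonneg hθL hβL hβ'L hindep hμθ hσθ hμβ hμβ' hcond
end

section
/- With E[Y] = Kμ_θμ_β, Var[Y] = K(μ_θμ_β + μ_β²σ_θ² + μ_θ²σ_β² + σ_θ²σ_β²), ρ_1 = Kμ_β²σ_θ²/Var[Y], ρ_2 = Kμ_θ²σ_β²/Var[Y], and K, μ_θ, μ_β, σ_θ, σ_β > 0, one can recover K via K = ((1 − ρ_1 − ρ_2)·Var[Y] − E[Y]) / (ρ_1·ρ_2) · (E[Y]/Var[Y])². -/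
/-- Poisson MF: the number of factors is recovered as
`K = ((1 − ρ₁ − ρ₂) Var[Y] − E[Y]) / (ρ₁ ρ₂) · (E[Y]/Var[Y])²`. -/
theorem pmf_recover_K (K : ℕ) (μθ μβ σθ σβ : ℝ)
    (hK : 0 < K) (hμθ : 0 < μθ) (hμβ : 0 < μβ) (hσθ : 0 < σθ) (hσβ : 0 < σβ)
    (EY VarY ρ₁ ρ₂ : ℝ)
    (hEY : EY = K * (μθ * μβ))
    (hVarY : VarY = K * (μθ * μβ + μβ^2 * σθ^2 + μθ^2 * σβ^2 + σθ^2 * σβ^2))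
    (hρ₁ : ρ₁ = K * (μβ^2 * σθ^2) / VarY)
    (hρ₂ : ρ₂ = K * (μθ^2 * σβ^2) / VarY) :
    (K : ℝ) = ((1 - ρ₁ - ρ₂) * VarY - EY) / (ρ₁ * ρ₂) * (EY / VarY)^2 := by
  have hK' : (0:ℝ) < K := by exact_mod_cast hK
  have hVpos : 0 < VarY := by
    rw [hVarY]; positivity
  subst hEY hVarY hρ₁ hρ₂
  have hV := hVpos.ne'
  field_simp
  ring
end

section
/- In the compound Poisson matrix factorization model where N ~ Poisson(∑_{k=1}^K θ_kβ_k) with mutually independent θ_k (mean μ_θ, variance σ_θ²) and β_k (mean μ_β, variance σ_β²), and Y given N has mean κNψ' and variance κNψ'', the marginal moments are E[Y] = κψ'·K·μ_θμ_β and Var[Y] = κψ''·Kμ_θμ_β + (κψ')²·K·(μ_θμ_β + μ_β²σ_θ² + μ_θ²σ_β² + σ_θ²σ_β²). -/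
/-!
Conditionally on the rate `Λ = ∑ₖ θₖ βₖ`, `N` is Poisson, and the Stein–Chen identity
`E[N g(N)] = r E[g(N + 1)]` for `N ~ Poisson(r)` gives `E[N | Λ] = Λ` and `E[N² | Λ] = Λ² + Λ`;
hence `E N = E Λ` and `E N² = E Λ² + E Λ`. The summands `θₖ βₖ` are pairwise independent, and
for independent `θ, β` one has `Var(θβ) = μβ² σθ² + μθ² σβ² + σθ² σβ²`, which gives `E Λ` and
`Var Λ`. Finally the tower property for `Y` given `N` yields `E Y = κψ' E N` and
`E Y² = κψ'' E N + (κψ')² E N²`.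
-/

open MeasureTheory Real
open scoped ENNReal NNReal Nat

namespace ProbabilityTheory

lemma lintegral_poissonMeasure (r : ℝ≥0) (g : ℕ → ℝ≥0∞) :
    ∫⁻ n, g n ∂poissonMeasure r = ∑' n, ENNReal.ofReal (exp (-r) * r ^ n / n !) * g n := by
  simp_rw [lintegral_countable', poissonMeasure_singleton, mul_comm]

lemma lintegral_natCast_mul_poissonMeasure (r : ℝ≥0) (g : ℕ → ℝ≥0∞) :
    ∫⁻ n, n * g n ∂poissonMeasure r = r * ∫⁻ n, g (n + 1) ∂poissonMeasure r := by
  have hweight (n : ℕ) : ENNReal.ofReal (exp (-r) * r ^ (n + 1) / (n + 1)!) * (n + 1 : ℕ)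
      = r * ENNReal.ofReal (exp (-r) * r ^ n / n !) := by
    have h : exp (-r) * r ^ (n + 1) / (n + 1)! * (n + 1 : ℕ) = r * (exp (-r) * r ^ n / n !) := by
      rw [Nat.factorial_succ]
      push_cast
      field_simp
      ring
    rw [← ENNReal.ofReal_natCast, ← ENNReal.ofReal_mul (by positivity), h,
      ENNReal.ofReal_mul r.coe_nonneg, ENNReal.ofReal_coe_nnreal]
  simp_rw [lintegral_poissonMeasure, ← ENNReal.tsum_mul_left]
  rw [tsum_eq_zero_add' ENNReal.summable]
  simp_rw [← mul_assoc, hweight]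
  simp [mul_assoc]

lemma lintegral_natCast_poissonMeasure (r : ℝ≥0) :
    ∫⁻ n, (n : ℝ≥0∞) ∂poissonMeasure r = r := by
  simpa using lintegral_natCast_mul_poissonMeasure r 1

lemma lintegral_natCast_sq_poissonMeasure (r : ℝ≥0) :
    ∫⁻ n, (n : ℝ≥0∞) ^ 2 ∂poissonMeasure r = r * (r + 1) := by
  simp_rw [sq, lintegral_natCast_mul_poissonMeasure, Nat.cast_add, Nat.cast_one]
  rw [lintegral_add_right _ measurable_const, lintegral_natCast_poissonMeasure]
  simp

variable {Ω α β : Type*} {mΩ : MeasurableSpace Ω} {mα : MeasurableSpace α}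
  {mβ : MeasurableSpace β} {μ : Measure Ω}

lemma lintegral_comp_eq_lintegral_condDistrib [StandardBorelSpace β] [Nonempty β]
    [IsFiniteMeasure μ] {X : Ω → α} {Y : Ω → β} (hX : Measurable X) (hY : AEMeasurable Y μ)
    {g : β → ℝ≥0∞} (hg : Measurable g) :
    ∫⁻ ω, g (Y ω) ∂μ = ∫⁻ ω, ∫⁻ y, g y ∂condDistrib Y X μ (X ω) ∂μ := by
  calc ∫⁻ ω, g (Y ω) ∂μ = ∫⁻ p, g p.2 ∂μ.map (fun ω ↦ (X ω, Y ω)) :=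
        (lintegral_map' (hg.comp measurable_snd).aemeasurable
          (hX.aemeasurable.prodMk hY)).symm
    _ = ∫⁻ x, ∫⁻ y, g y ∂condDistrib Y X μ x ∂μ.map X := by
        rw [← compProd_map_condDistrib hY,
          Measure.lintegral_compProd (f := fun p ↦ g p.2) (hg.comp measurable_snd)]
    _ = ∫⁻ ω, ∫⁻ y, g y ∂condDistrib Y X μ (X ω) ∂μ :=
        lintegral_map ((hg.comp measurable_snd).lintegral_kernel_prod_right
          (f := fun _ y ↦ g y)) hX

lemma integrable_and_integral_eq_of_lintegral_ofReal_eq {f g : Ω → ℝ}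
    (hfm : AEStronglyMeasurable f μ) (hf : 0 ≤ᵐ[μ] f) (hg : Integrable g μ) (hg0 : 0 ≤ᵐ[μ] g)
    (h : ∫⁻ ω, ENNReal.ofReal (f ω) ∂μ = ∫⁻ ω, ENNReal.ofReal (g ω) ∂μ) :
    Integrable f μ ∧ ∫ ω, f ω ∂μ = ∫ ω, g ω ∂μ := by
  refine ⟨(lintegral_ofReal_ne_top_iff_integrable hfm hf).1 ?_, ?_⟩
  · rw [h]
    exact (lintegral_ofReal_ne_top_iff_integrable hg.aestronglyMeasurable hg0).2 hg
  · rw [integral_eq_lintegral_of_nonneg_ae hf hfm,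
      integral_eq_lintegral_of_nonneg_ae hg0 hg.aestronglyMeasurable, h]

section MixedPoisson

variable [IsFiniteMeasure μ] {X : Ω → ℝ} {N : Ω → ℕ} (hX : Measurable X) (hN : Measurable N)
  (hX0 : ∀ ω, 0 ≤ X ω)
  (hcond : ∀ᵐ ω ∂μ, condDistrib N X μ (X ω) = poissonMeasure (X ω).toNNReal)
include hX hN hcond

lemma lintegral_comp_of_condDistrib_eq_poissonMeasure (g : ℕ → ℝ≥0∞) :
    ∫⁻ ω, g (N ω) ∂μ = ∫⁻ ω, ∫⁻ n, g n ∂poissonMeasure (X ω).toNNReal ∂μ := by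
  rw [lintegral_comp_eq_lintegral_condDistrib hX hN.aemeasurable (measurable_of_countable g)]
  exact lintegral_congr_ae (hcond.mono fun ω h ↦ congrArg (fun ν ↦ ∫⁻ n, g n ∂ν) h)

include hX0

lemma integral_natCast_of_condDistrib_eq_poissonMeasure (hXi : Integrable X μ) :
    Integrable (fun ω ↦ (N ω : ℝ)) μ ∧ ∫ ω, (N ω : ℝ) ∂μ = ∫ ω, X ω ∂μ := by
  refine integrable_and_integral_eq_of_lintegral_ofReal_eq (by fun_prop)
    (.of_forall fun ω ↦ by positivity) hXi (.of_forall hX0) ?_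
  simp_rw [ENNReal.ofReal_natCast]
  rw [lintegral_comp_of_condDistrib_eq_poissonMeasure hX hN hcond (fun n ↦ (n : ℝ≥0∞))]
  simp_rw [lintegral_natCast_poissonMeasure]
  rfl

lemma integral_natCast_sq_of_condDistrib_eq_poissonMeasure (hXi : MemLp X 2 μ) :
    Integrable (fun ω ↦ (N ω : ℝ) ^ 2) μ ∧
      ∫ ω, (N ω : ℝ) ^ 2 ∂μ = ∫ ω, X ω ^ 2 ∂μ + ∫ ω, X ω ∂μ := by
  have hXi1 := hXi.integrable one_le_two
  rw [← integral_add hXi.integrable_sq hXi1]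
  refine integrable_and_integral_eq_of_lintegral_ofReal_eq (by fun_prop)
    (.of_forall fun ω ↦ by positivity) (hXi.integrable_sq.add hXi1)
    (.of_forall fun ω ↦ add_nonneg (sq_nonneg _) (hX0 ω)) ?_
  simp_rw [ENNReal.ofReal_pow (Nat.cast_nonneg _), ENNReal.ofReal_natCast]
  rw [lintegral_comp_of_condDistrib_eq_poissonMeasure hX hN hcond (fun n ↦ (n : ℝ≥0∞) ^ 2)]
  simp_rw [lintegral_natCast_sq_poissonMeasure]
  refine lintegral_congr fun ω ↦ ?_
  rw [ENNReal.ofReal_add (sq_nonneg _) (hX0 ω), ENNReal.ofReal_pow (hX0 ω)]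
  change ENNReal.ofReal (X ω) * (ENNReal.ofReal (X ω) + 1) = _
  ring

end MixedPoisson

lemma IndepFun.memLp_two_mul {X Y : Ω → ℝ} (h : IndepFun X Y μ) (hX : MemLp X 2 μ)
    (hY : MemLp Y 2 μ) : MemLp (X * Y) 2 μ := by
  refine (memLp_two_iff_integrable_sq (hX.1.mul hY.1)).2 ?_
  simp_rw [Pi.mul_apply, mul_pow]
  exact (h.comp (measurable_id.pow_const 2) (measurable_id.pow_const 2)).integrable_mul
    hX.integrable_sq hY.integrable_sq

lemma IndepFun.variance_mul [IsProbabilityMeasure μ] {X Y : Ω → ℝ} (h : IndepFun X Y μ)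
    (hX : MemLp X 2 μ) (hY : MemLp Y 2 μ) :
    variance (X * Y) μ =
      μ[Y] ^ 2 * variance X μ + μ[X] ^ 2 * variance Y μ + variance X μ * variance Y μ := by
  have hsq : μ[(X * Y) ^ 2] = μ[X ^ 2] * μ[Y ^ 2] := by
    rw [mul_pow]
    exact (h.comp (measurable_id.pow_const 2) (measurable_id.pow_const 2))
      |>.integral_mul_eq_mul_integral hX.integrable_sq.1 hY.integrable_sq.1
  have hmean : μ[X * Y] = μ[X] * μ[Y] := h.integral_mul_eq_mul_integral hX.1 hY.1
  rw [variance_eq_sub (h.memLp_two_mul hX hY), variance_eq_sub hX, variance_eq_sub hY, hsq,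
    hmean]
  ring

lemma iIndepFun.integral_sum_mul {ι : Type*} [Fintype ι] {θ β : ι → Ω → ℝ}
    (hindep : iIndepFun (Sum.elim θ β) μ) (hθ : ∀ i, Integrable (θ i) μ)
    (hβ : ∀ i, Integrable (β i) μ) :
    ∫ ω, ∑ i, θ i ω * β i ω ∂μ = ∑ i, μ[θ i] * μ[β i] := by
  have hθβ (i : ι) : IndepFun (θ i) (β i) μ := hindep.indepFun Sum.inl_ne_inr
  rw [integral_finsetSum (f := fun i ω ↦ θ i ω * β i ω) _
    fun i _ ↦ (hθβ i).integrable_mul (hθ i) (hβ i)]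
  exact Finset.sum_congr rfl fun i _ ↦ (hθβ i).integral_fun_mul_eq_mul_integral (hθ i).1 (hβ i).1

lemma iIndepFun.variance_sum_mul [IsProbabilityMeasure μ] {ι : Type*} [Fintype ι]
    {θ β : ι → Ω → ℝ} (hindep : iIndepFun (Sum.elim θ β) μ) (hθm : ∀ i, Measurable (θ i))
    (hβm : ∀ i, Measurable (β i)) (hθ : ∀ i, MemLp (θ i) 2 μ) (hβ : ∀ i, MemLp (β i) 2 μ) :
    variance (∑ i, θ i * β i) μ = ∑ i, (μ[β i] ^ 2 * variance (θ i) μ +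
      μ[θ i] ^ 2 * variance (β i) μ + variance (θ i) μ * variance (β i) μ) := by
  have hθβ (i : ι) : IndepFun (θ i) (β i) μ := hindep.indepFun Sum.inl_ne_inr
  rw [IndepFun.variance_sum (fun i _ ↦ (hθβ i).memLp_two_mul (hθ i) (hβ i))]
  · exact Finset.sum_congr rfl fun i _ ↦ (hθβ i).variance_mul (hθ i) (hβ i)
  · intro i _ j _ hij
    exact hindep.indepFun_mul_mul (Sum.forall.2 ⟨hθm, hβm⟩) (.inl i) (.inr i) (.inl j) (.inr j)
      (by simpa using hij) Sum.inl_ne_inr Sum.inr_ne_inl (by simpa using hij)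

end ProbabilityTheory

open ProbabilityTheory

theorem cpmf_prior_predictive_moments_general {Ω : Type*} [MeasureSpace Ω]
    [IsProbabilityMeasure (ℙ : Measure Ω)] (K : ℕ) (θ β : Fin K → Ω → ℝ)
    (N : Ω → ℕ) (Y : Ω → ℝ) (μθ μβ σθ σβ κ ψ' ψ'' : ℝ)
    (hθmeas : ∀ k, Measurable (θ k)) (hβmeas : ∀ k, Measurable (β k))
    (hNmeas : Measurable N)
    (hθnonneg : ∀ k ω, 0 ≤ θ k ω) (hβnonneg : ∀ k ω, 0 ≤ β k ω)
    (hθ : ∀ k, MemLp (θ k) 2 ℙ) (hβ : ∀ k, MemLp (β k) 2 ℙ)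
    (hY : MemLp Y 2 ℙ)
    (hindep : iIndepFun (m := fun _ => Real.measurableSpace) (Sum.elim θ β) ℙ)
    (hμθ : ∀ k, (∫ ω, θ k ω) = μθ) (hσθ : ∀ k, variance (θ k) ℙ = σθ^2)
    (hμβ : ∀ k, (∫ ω, β k ω) = μβ) (hσβ : ∀ k, variance (β k) ℙ = σβ^2)
    (hNcond : ∀ᵐ ω ∂ℙ,
      condDistrib N (fun ω' => ∑ k, θ k ω' * β k ω') ℙ (∑ k, θ k ω * β k ω) =
        poissonMeasure (∑ k, θ k ω * β k ω).toNNReal)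
    (hYmean : (ℙ[Y | MeasurableSpace.comap N inferInstance]) =ᵐ[ℙ]
      fun ω => κ * (N ω : ℝ) * ψ')
    (hYvar : (ℙ[fun ω => (Y ω)^2 | MeasurableSpace.comap N inferInstance]) =ᵐ[ℙ]
      fun ω => κ * (N ω : ℝ) * ψ'' + (κ * (N ω : ℝ) * ψ')^2) :
    (∫ ω, Y ω) = κ * ψ' * K * (μθ * μβ) ∧
      variance Y ℙ = κ * ψ'' * K * (μθ * μβ) +
        (κ * ψ')^2 * K * (μθ * μβ + μβ^2 * σθ^2 + μθ^2 * σβ^2 + σθ^2 * σβ^2) := by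
  set X : Ω → ℝ := fun ω ↦ ∑ k, θ k ω * β k ω
  have hX : X = ∑ k, θ k * β k := by ext ω; simp [X]
  have hXmem : MemLp X 2 ℙ := hX ▸ memLp_finsetSum' _ fun k _ ↦
    (hindep.indepFun Sum.inl_ne_inr).memLp_two_mul (hθ k) (hβ k)
  have hEX : ∫ ω, X ω = K * (μθ * μβ) := by
    simp [X, hindep.integral_sum_mul (fun k ↦ (hθ k).integrable one_le_two)
      (fun k ↦ (hβ k).integrable one_le_two), hμθ, hμβ]
  have hVX : variance X ℙ = K * (μβ^2 * σθ^2 + μθ^2 * σβ^2 + σθ^2 * σβ^2) := by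
    rw [hX, hindep.variance_sum_mul hθmeas hβmeas hθ hβ]
    simp only [hμθ, hμβ, hσθ, hσβ, Finset.sum_const, Finset.card_univ, Fintype.card_fin,
      nsmul_eq_mul]
  have hX0 (ω : Ω) : 0 ≤ X ω :=
    Finset.sum_nonneg fun k _ ↦ mul_nonneg (hθnonneg k ω) (hβnonneg k ω)
  have hXmeas : Measurable X := by fun_prop
  obtain ⟨hN, hEN⟩ := integral_natCast_of_condDistrib_eq_poissonMeasure hXmeas hNmeas hX0 hNcond
    (hXmem.integrable one_le_two)
  obtain ⟨hN2, hEN2⟩ :=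
    integral_natCast_sq_of_condDistrib_eq_poissonMeasure hXmeas hNmeas hX0 hNcond hXmem
  have hm := hNmeas.comap_le
  have hEY : ∫ ω, Y ω = κ * ψ' * ∫ ω, (N ω : ℝ) := by
    rw [← integral_condExp hm, integral_congr_ae hYmean, ← integral_const_mul]
    simp only [mul_right_comm κ, mul_comm (κ * ψ')]
  have hEY2 :
      ∫ ω, Y ω ^ 2 = κ * ψ'' * (∫ ω, (N ω : ℝ)) + (κ * ψ') ^ 2 * ∫ ω, (N ω : ℝ) ^ 2 := by
    rw [← integral_condExp hm, integral_congr_ae hYvar, ← integral_const_mul,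
      ← integral_const_mul, ← integral_add (hN.const_mul _) (hN2.const_mul _)]
    congr 1 with ω
    ring
  rw [variance_eq_sub hXmem, hEX] at hVX
  refine ⟨by rw [hEY, hEN, hEX]; ring, ?_⟩
  rw [variance_eq_sub hY]
  simp only [Pi.pow_apply] at hVX ⊢
  rw [hEY2, hEY, hEN2, hEN, hEX]
  linear_combination (κ * ψ') ^ 2 * hVX

/-- Compound Poisson matrix factorization prior predictive moments: with
`N ~ Poisson(∑_k θ_k β_k)` for mutually independent latent factors and `Y` having
conditional mean `κ N ψ'` and conditional variance `κ N ψ''` given `N`, we get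
`E[Y] = κψ' K μθ μβ` and
`Var[Y] = κψ'' K μθ μβ + (κψ')² K (μθμβ + μβ²σθ² + μθ²σβ² + σθ²σβ²)`. -/
theorem cpmf_prior_predictive_moments {Ω : Type*} [MeasureSpace Ω]
    [IsProbabilityMeasure (ℙ : Measure Ω)] (K : ℕ) (θ β : Fin K → Ω → ℝ)
    (N : Ω → ℕ) (Y : Ω → ℝ) (μθ μβ σθ σβ κ ψ' ψ'' : ℝ)
    (hκ : 0 < κ) (hψ' : 0 < ψ') (hψ'' : 0 < ψ'')
    (hθmeas : ∀ k, Measurable (θ k)) (hβmeas : ∀ k, Measurable (β k))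
    (hNmeas : Measurable N)
    (hθnonneg : ∀ k ω, 0 ≤ θ k ω) (hβnonneg : ∀ k ω, 0 ≤ β k ω)
    (hθ : ∀ k, MemLp (θ k) 2 ℙ) (hβ : ∀ k, MemLp (β k) 2 ℙ)
    (hY : MemLp Y 2 ℙ)
    (hindep : iIndepFun (m := fun _ => Real.measurableSpace) (Sum.elim θ β) ℙ)
    (hμθ : ∀ k, (∫ ω, θ k ω) = μθ) (hσθ : ∀ k, variance (θ k) ℙ = σθ^2)
    (hμβ : ∀ k, (∫ ω, β k ω) = μβ) (hσβ : ∀ k, variance (β k) ℙ = σβ^2)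
    (hNcond : ∀ᵐ ω ∂ℙ,
      condDistrib N (fun ω' => ∑ k, θ k ω' * β k ω') ℙ (∑ k, θ k ω * β k ω) =
        poissonMeasure (∑ k, θ k ω * β k ω).toNNReal)
    (hYmean : (ℙ[Y | MeasurableSpace.comap N inferInstance]) =ᵐ[ℙ]
      fun ω => κ * (N ω : ℝ) * ψ')
    (hYvar : (ℙ[fun ω => (Y ω)^2 | MeasurableSpace.comap N inferInstance]) =ᵐ[ℙ]
      fun ω => κ * (N ω : ℝ) * ψ'' + (κ * (N ω : ℝ) * ψ')^2) :
    (∫ ω, Y ω) = κ * ψ' * K * (μθ * μβ) ∧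
      variance Y ℙ = κ * ψ'' * K * (μθ * μβ) +
        (κ * ψ')^2 * K * (μθ * μβ + μβ^2 * σθ^2 + μθ^2 * σβ^2 + σθ^2 * σβ^2) :=
  cpmf_prior_predictive_moments_general K θ β N Y μθ μβ σθ σβ κ ψ' ψ'' hθmeas hβmeas hNmeas hθnonneg
    hβnonneg hθ hβ hY hindep hμθ hσθ hμβ hσβ hNcond hYmean hYvar
end

section
/- With compound Poisson MF prior predictive quantities E[Y] = κψ'Kμ_θμ_β, Var[Y] = κψ''Kμ_θμ_β + (κψ')²K(μ_θμ_β + μ_β²σ_θ² + μ_θ²σ_β² + σ_θ²σ_β²), ρ_1 = K(κψ')²μ_β²σ_θ²/Var[Y], ρ_2 = K(κψ')²μ_θ²σ_β²/Var[Y], and all parameters positive, the number of factors satisfies K = ((1 − ρ_1 − ρ_2)·Var[Y] − (κψ' + ψ''/ψ')·E[Y]) / (ρ_1ρ_2) · (E[Y]/Var[Y])². -/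
/-- Compound Poisson MF: recovering the number of factors
`K = ((1 − ρ₁ − ρ₂) Var[Y] − (κψ' + ψ''/ψ') E[Y]) / (ρ₁ ρ₂) · (E[Y]/Var[Y])²`. -/
theorem cpmf_recover_K (K μθ μβ σθ σβ κ ψ' ψ'' : ℝ)
    (hK : 0 < K) (hμθ : 0 < μθ) (hμβ : 0 < μβ) (hσθ : 0 < σθ) (hσβ : 0 < σβ)
    (hκ : 0 < κ) (hψ' : 0 < ψ') (hψ'' : 0 < ψ'')
    (EY VarY ρ₁ ρ₂ : ℝ)
    (hEY : EY = κ * ψ' * K * (μθ * μβ))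
    (hVarY : VarY = κ * ψ'' * K * (μθ * μβ) +
      (κ * ψ')^2 * K * (μθ * μβ + μβ^2 * σθ^2 + μθ^2 * σβ^2 + σθ^2 * σβ^2))
    (hρ₁ : ρ₁ = K * (κ * ψ')^2 * (μβ^2 * σθ^2) / VarY)
    (hρ₂ : ρ₂ = K * (κ * ψ')^2 * (μθ^2 * σβ^2) / VarY) :
    K = ((1 - ρ₁ - ρ₂) * VarY - (κ * ψ' + ψ'' / ψ') * EY) / (ρ₁ * ρ₂) *
      (EY / VarY)^2 := by
  have hV : 0 < VarY := by
    rw [hVarY]; positivity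
  subst hEY hρ₁ hρ₂ hVarY
  field_simp
  ring
end
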